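/- arXiv:1806.01331 — 4 statements merged into one kernel-verified Lean document; each statement's English description precedes it below -/
import Mathlib

section
/- For all nonnegative integers n, k, i, j, m with i < j ≤ k ≤ n and m ≤ k - j, the following binomial coefficient identity holds: C(n, k-i) · C(k-i, j-i+m) · C(n-k+i, m) = C(n, k-j) · C(k-j, m) · C(n-k+j, j-i+m). -/
/-!
Put `p = k - j - m`, `q = j - i + m`, `r = m`, `s = n - k + i - m`. Then both sides are products of
three binomials splitting an `n`-set into blocks of sizes `p, q, r, s`, in the orders
`(p ∪ q) ∪ (r ∪ s)` and `(p ∪ r) ∪ (q ∪ s)`; each equals the multinomial `n! / (p! q! r! s!)`.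
When `m > k - j` or `m > n - k + i` one factor on each side vanishes.
-/

open Nat

theorem Nat.choose_mul_choose_mul_choose_mul_factorial (p q r s : ℕ) :
    (p + q + r + s).choose (p + q) * (p + q).choose q * (r + s).choose r *
      (p ! * q ! * r ! * s !) = (p + q + r + s)! := by
  have hpq := add_choose_mul_factorial_mul_factorial p q
  have hrs := add_choose_mul_factorial_mul_factorial s r
  have hN := add_choose_mul_factorial_mul_factorial (r + s) (p + q)
  rw [add_comm s r] at hrs
  rw [show r + s + (p + q) = p + q + r + s by ring] at hN
  rw [← hN, ← hpq, ← hrs]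
  ring

theorem Nat.choose_mul_choose_mul_choose_comm {n : ℕ} (p q r s : ℕ) (hn : p + q + r + s = n) :
    n.choose (p + q) * (p + q).choose q * (r + s).choose r =
      n.choose (p + r) * (p + r).choose r * (q + s).choose q := by
  subst hn
  refine Nat.eq_of_mul_eq_mul_right (by positivity : 0 < p ! * q ! * r ! * s !) ?_
  rw [choose_mul_choose_mul_choose_mul_factorial, add_right_comm p q r, mul_right_comm (p !),
    choose_mul_choose_mul_choose_mul_factorial]

theorem binomial_detailed_balance_identity_general
    (n k i j m : ℕ) (hij : i < j) (hjk : j ≤ k) (hkn : k ≤ n) :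
    n.choose (k - i) * (k - i).choose (j - i + m) * (n - k + i).choose m =
      n.choose (k - j) * (k - j).choose m * (n - k + j).choose (j - i + m) := by
  by_cases hmj : k - j < m
  · rw [choose_eq_zero_of_lt (by omega : k - i < j - i + m), choose_eq_zero_of_lt hmj]
    simp
  by_cases hmi : n - k + i < m
  · rw [choose_eq_zero_of_lt hmi, choose_eq_zero_of_lt (by omega : n - k + j < j - i + m)]
    simp
  obtain ⟨p, s, hp, hs⟩ : ∃ p s, k - j = p + m ∧ n - k + i = m + s :=
    ⟨k - j - m, n - k + i - m, by omega, by omega⟩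
  rw [show k - i = p + (j - i + m) by omega, show n - k + j = j - i + m + s by omega, hp, hs]
  exact choose_mul_choose_mul_choose_comm p (j - i + m) m s (by omega)

theorem binomial_detailed_balance_identity
    (n k i j m : ℕ) (hij : i < j) (hjk : j ≤ k) (hkn : k ≤ n) (hm : m ≤ k - j) :
    n.choose (k - i) * (k - i).choose (j - i + m) * (n - k + i).choose m =
      n.choose (k - j) * (k - j).choose m * (n - k + j).choose (j - i + m) :=
  binomial_detailed_balance_identity_general n k i j m hij hjk hkn
end

section
/- Let k ≥ 2 be a fixed integer and for 0 ≤ i < j ≤ k define p_i^j(n) = Σ_{m=0}^{k-j} C(k-i, j-i+m) · C(n-k+i, m) / C(n, j-i+2m) (each summand weighted by a probability Pr[α = j-i+2m] ∈ [0,1]). Then p_i^j(n) = O(n^{-(j-i)}) as n → ∞. -/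
open Finset Asymptotics Filter

/-!
Since `C(n, r) = Θ(n ^ r)`, each of the finitely many summands, a constant times
`C(n - k + i, m) / C(n, j - i + 2m)`, is `O(n ^ (m - (j - i + 2m))) = O(n ^ (-(j - i) - m))`,
hence `O(n ^ (-(j - i)))`.
-/

lemma isBigO_natCast_zpow_of_le {a b : ℤ} (h : a ≤ b) :
    (fun n : ℕ => (n : ℝ) ^ a) =O[atTop] fun n : ℕ => (n : ℝ) ^ b := by
  refine IsBigO.of_bound 1 ?_
  filter_upwards [eventually_ge_atTop 1] with n hn
  have hn' : (1 : ℝ) ≤ n := by exact_mod_cast hn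
  rw [Real.norm_of_nonneg (by positivity), Real.norm_of_nonneg (by positivity), one_mul]
  exact zpow_le_zpow_right₀ hn' h

lemma isBigO_inv_choose (r : ℕ) :
    (fun n : ℕ => (n.choose r : ℝ)⁻¹) =O[atTop] fun n : ℕ => (n : ℝ) ^ (-(r : ℤ)) := by
  simpa only [zpow_neg, zpow_natCast] using (isTheta_choose r).inv.isBigO

lemma isBigO_choose_sub_add (a b m : ℕ) :
    (fun n : ℕ => ((n - a + b).choose m : ℝ)) =O[atTop] fun n : ℕ => (n : ℝ) ^ m := by
  have hshift : Tendsto (fun n : ℕ => n - a + b) atTop atTop :=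
    tendsto_atTop_mono (fun n => by omega) (tendsto_sub_atTop_nat a)
  have hlin : (fun n : ℕ => ((n - a + b : ℕ) : ℝ)) =O[atTop] fun n : ℕ => (n : ℝ) := by
    refine IsBigO.of_bound 2 ?_
    filter_upwards [eventually_ge_atTop b] with n hn
    simp only [Real.norm_natCast]
    exact_mod_cast (show n - a + b ≤ 2 * n by omega)
  exact ((isTheta_choose m).isBigO.comp_tendsto hshift).trans (hlin.pow m)

lemma isBigO_mul_choose_div_choose_mul (A c : ℝ) (a b m r : ℕ) :
    (fun n : ℕ => A * ((n - a + b).choose m : ℝ) / n.choose r * c)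
      =O[atTop] fun n : ℕ => (n : ℝ) ^ ((m : ℤ) - r) := by
  have h := ((isBigO_choose_sub_add a b m).mul (isBigO_inv_choose r)).const_mul_left (A * c)
  refine h.congr' (Eventually.of_forall fun n => by ring) ?_
  filter_upwards [eventually_ne_atTop 0] with n hn
  rw [sub_eq_add_neg, zpow_add₀ (by exact_mod_cast hn), zpow_natCast]

theorem level_up_transition_prob_isBigO_general
    (k i j : ℕ)
    (Pr : ℕ → ℝ) :
    (fun n : ℕ => ∑ m ∈ Finset.range (k - j + 1),
        ((k - i).choose (j - i + m) * (n - k + i).choose m : ℝ) / (n.choose (j - i + 2 * m)) *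
          Pr (j - i + 2 * m))
      =O[atTop] fun n : ℕ => (n : ℝ) ^ (-(j - i : ℤ)) :=
  .fun_sum fun m _ => (isBigO_mul_choose_div_choose_mul _ _ k i m _).trans
    (isBigO_natCast_zpow_of_le (by omega))

theorem level_up_transition_prob_isBigO
    (k i j : ℕ) (hk : 2 ≤ k) (hij : i < j) (hjk : j ≤ k)
    (Pr : ℕ → ℝ) (hPr0 : ∀ m, 0 ≤ Pr m) (hPr1 : ∀ m, Pr m ≤ 1) :
    (fun n : ℕ => ∑ m ∈ Finset.range (k - j + 1),
        ((k - i).choose (j - i + m) * (n - k + i).choose m : ℝ) / (n.choose (j - i + 2 * m)) *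
          Pr (j - i + 2 * m))
      =O[atTop] fun n : ℕ => (n : ℝ) ^ (-(j - i : ℤ)) :=
  level_up_transition_prob_isBigO_general k i j Pr
end

section
/- Fix an integer k ≥ 2 and a constant γ > 0, and define d(γ) = e^{-γ} Σ_{i=1}^{k} γ^i / i!. Then d'(γ) = e^{-γ}(1 - γ^k / k!), d(0) = 0, lim_{γ→∞} d(γ) = 0, and d attains its unique maximum on [0, ∞) at γ = (k!)^{1/k}. -/
open Finset Filter Real

/-!
The derivative of `∑_{i=1}^k γ^i/i!` is `∑_{i=0}^{k-1} γ^i/i!`, and the two sums differ by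
`1 - γ^k/k!`; hence `d' = e^{-γ}(1 - γ^k/k!)`, which is positive below `(k!)^{1/k}` and negative
above it, so `d` rises and then falls, peaking strictly there. Each term `γ^i e^{-γ}` tends to `0`.
-/

theorem apply_lt_of_hasDerivAt_pos_of_neg {f f' : ℝ → ℝ} {a c x : ℝ}
    (hf : ∀ y, HasDerivAt f (f' y) y) (hpos : ∀ y ∈ Set.Ioo a c, 0 < f' y)
    (hneg : ∀ y ∈ Set.Ioi c, f' y < 0) (hax : a ≤ x) (hxc : x ≠ c) : f x < f c := by
  have hcont : Continuous f := continuous_iff_continuousAt.2 fun y ↦ (hf y).continuousAt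
  rcases hxc.lt_or_gt with hlt | hgt
  · have hmono : StrictMonoOn f (Set.Icc a c) :=
      strictMonoOn_of_hasDerivWithinAt_pos (convex_Icc a c) hcont.continuousOn
        (fun y _ ↦ (hf y).hasDerivWithinAt) (by simpa only [interior_Icc] using hpos)
    exact hmono ⟨hax, hlt.le⟩ ⟨hax.trans hlt.le, le_rfl⟩ hlt
  · have hanti : StrictAntiOn f (Set.Ici c) :=
      strictAntiOn_of_hasDerivWithinAt_neg (convex_Ici c) hcont.continuousOn
        (fun y _ ↦ (hf y).hasDerivWithinAt) (by simpa only [interior_Ici] using hneg)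
    exact hanti Set.self_mem_Ici hgt.le hgt

theorem hasDerivAt_sum_Icc_pow_div_factorial (k : ℕ) (γ : ℝ) :
    HasDerivAt (fun x : ℝ ↦ ∑ i ∈ Icc 1 k, x ^ i / (i.factorial : ℝ))
      (∑ i ∈ range k, γ ^ i / (i.factorial : ℝ)) γ := by
  induction k with
  | zero => simpa using hasDerivAt_const γ (0 : ℝ)
  | succ k ih =>
    simp only [sum_Icc_succ_top (Nat.le_add_left 1 k), sum_range_succ]
    have hterm : HasDerivAt (fun x : ℝ ↦ x ^ (k + 1) / ((k + 1).factorial : ℝ))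
        (γ ^ k / (k.factorial : ℝ)) γ := by
      refine ((hasDerivAt_pow (k + 1) γ).div_const _).congr_deriv ?_
      rw [Nat.factorial_succ, Nat.add_sub_cancel]
      push_cast
      field_simp
    exact ih.add hterm

theorem sum_range_sub_sum_Icc_pow_div_factorial (k : ℕ) (γ : ℝ) :
    ∑ i ∈ range k, γ ^ i / (i.factorial : ℝ) - ∑ i ∈ Icc 1 k, γ ^ i / (i.factorial : ℝ) =
      1 - γ ^ k / (k.factorial : ℝ) := by
  induction k with
  | zero => simp
  | succ k ih =>
    rw [sum_range_succ, sum_Icc_succ_top (Nat.le_add_left 1 k)]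
    linarith

theorem factorial_rpow_one_div_pow {k : ℕ} (hk : k ≠ 0) :
    ((k.factorial : ℝ) ^ ((1 : ℝ) / k)) ^ k = k.factorial := by
  rw [one_div, rpow_inv_natCast_pow (Nat.cast_nonneg _) hk]

theorem one_sub_pow_div_factorial_pos {k : ℕ} (hk : k ≠ 0) {x : ℝ} (hx₀ : 0 ≤ x)
    (hx : x < (k.factorial : ℝ) ^ ((1 : ℝ) / k)) : 0 < 1 - x ^ k / (k.factorial : ℝ) := by
  have hpow : x ^ k < k.factorial := factorial_rpow_one_div_pow hk ▸ pow_lt_pow_left₀ hx hx₀ hk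
  rw [sub_pos, div_lt_one (by positivity)]
  exact hpow

theorem one_sub_pow_div_factorial_neg {k : ℕ} (hk : k ≠ 0) {x : ℝ}
    (hx : (k.factorial : ℝ) ^ ((1 : ℝ) / k) < x) : 1 - x ^ k / (k.factorial : ℝ) < 0 := by
  have hpow : (k.factorial : ℝ) < x ^ k :=
    factorial_rpow_one_div_pow hk ▸ pow_lt_pow_left₀ hx (by positivity) hk
  rw [sub_neg, one_lt_div (by positivity)]
  exact hpow

noncomputable def flipProb (k : ℕ) (γ : ℝ) : ℝ :=
  exp (-γ) * ∑ i ∈ Icc 1 k, γ ^ i / (i.factorial : ℝ)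

theorem hasDerivAt_flipProb (k : ℕ) (γ : ℝ) :
    HasDerivAt (flipProb k) (exp (-γ) * (1 - γ ^ k / (k.factorial : ℝ))) γ := by
  have hexp : HasDerivAt (fun x : ℝ ↦ exp (-x)) (-exp (-γ)) γ := by
    simpa using (hasDerivAt_neg γ).exp
  refine (hexp.mul (hasDerivAt_sum_Icc_pow_div_factorial k γ)).congr_deriv ?_
  rw [← sum_range_sub_sum_Icc_pow_div_factorial]
  ring

theorem flipProb_zero (k : ℕ) : flipProb k 0 = 0 := by
  refine mul_eq_zero_of_right _ (sum_eq_zero fun i hi ↦ ?_)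
  rw [zero_pow (Nat.one_le_iff_ne_zero.1 (mem_Icc.1 hi).1), zero_div]

theorem tendsto_flipProb_atTop (k : ℕ) : Tendsto (flipProb k) atTop (nhds 0) := by
  have hterm (i : ℕ) : Tendsto (fun γ : ℝ ↦ γ ^ i * exp (-γ) / i.factorial) atTop (nhds 0) := by
    simpa only [zero_div] using
      (tendsto_pow_mul_exp_neg_atTop_nhds_zero i).div_const (i.factorial : ℝ)
  have hsum := tendsto_finsetSum (Icc 1 k) fun i _ ↦ hterm i
  rw [sum_const_zero] at hsum
  refine hsum.congr fun γ ↦ ?_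
  rw [flipProb, mul_sum]
  exact sum_congr rfl fun i _ ↦ by ring

theorem optimal_mutation_rate_standard_bit_mutation
    (k : ℕ) (hk : 2 ≤ k) :
    let d : ℝ → ℝ := fun γ => Real.exp (-γ) * ∑ i ∈ Finset.Icc 1 k, γ ^ i / (i.factorial : ℝ)
    let γstar : ℝ := (k.factorial : ℝ) ^ ((1 : ℝ) / k)
    (∀ γ : ℝ, HasDerivAt d (Real.exp (-γ) * (1 - γ ^ k / (k.factorial : ℝ))) γ) ∧
      d 0 = 0 ∧
      Tendsto d atTop (nhds 0) ∧
      (∀ γ ∈ Set.Ici (0 : ℝ), γ ≠ γstar → d γ < d γstar) := by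
  intro d γstar
  have hk₀ : k ≠ 0 := by omega
  refine ⟨hasDerivAt_flipProb k, flipProb_zero k, tendsto_flipProb_atTop k, ?_⟩
  intro γ hγ hne
  exact apply_lt_of_hasDerivAt_pos_of_neg (hasDerivAt_flipProb k)
    (fun x hx ↦ mul_pos (exp_pos _) (one_sub_pow_div_factorial_pos hk₀ hx.1.le hx.2))
    (fun x hx ↦ mul_neg_of_pos_of_neg (exp_pos _) (one_sub_pow_div_factorial_neg hk₀ hx)) hγ hne
end

section
/- Let k ≥ 2 and let P = (p_i^j) be a k×k real matrix with entries in [0,1] such that p_i^j = O(1/n) for all j > i, and p_i^i ≤ 1 - c for all i ≥ 1 where c > 0 satisfies c = ω(n^{-1/(k-1)}). Set ε = c^{k-1}/((k-1)·2^k). Then for n large enough, the characteristic polynomial χ_P(λ) = det(P - λI) has at most one root in the interval [1 - ε, 1], and no root in (-∞, -1/2]. -/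
/-!
Write `Q'` for `P` with its first row and column removed. For `R ≥ 1` the vector `(R ^ j)_j` is
almost an eigenvector of `P`: the lower entries (at most `1`) are damped by `R⁻¹`, the upper ones
(`O(1/n)`) amplified by at most `R ^ (k - 1)`. Taking `R⁻¹ ≍ c` (admissible because
`n ^ (-1/(k-1)) = o(c)`) gives `Q' v ≤ θ v` with `θ ≤ 1 - c/2 < 1 - ε`, so for `λ > θ` the
matrix `λ - Q'` is an M-matrix: it is invertible and its inverse preserves nonnegative vectors.
A root `λ > θ` of `χ_P` satisfies the Schur-complement equation `λ = p₀₀ + a ⬝ (λ - Q')⁻¹ b`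
with `a, b ≥ 0`, whose right-hand side is nonincreasing in `λ` by the resolvent identity; hence
there is at most one such root. For `λ ≤ -1/2` the same weights with
the fixed `R = 4k` make `λ - P` diagonally dominant after scaling its columns, and Gershgorin's
theorem gives `det (λ - P) ≠ 0`.
-/

open Finset Filter Asymptotics Matrix Polynomial

theorem smul_one_sub_mulVec_apply {R ι : Type*} [CommRing R] [Fintype ι] [DecidableEq ι]
    (A : Matrix ι ι R) (l : R) (y : ι → R) (i : ι) :
    ((l • 1 - A) *ᵥ y) i = l * y i - (A *ᵥ y) i := by
  simp [sub_mulVec, smul_mulVec]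

theorem eval_charpoly_eq_det_smul_one_sub {R ι : Type*} [CommRing R] [Fintype ι] [DecidableEq ι]
    (A : Matrix ι ι R) (l : R) : A.charpoly.eval l = (l • 1 - A).det := by
  rw [eval_charpoly, scalar_apply, smul_one_eq_diagonal]

section MMatrix

variable {ι : Type*} [Fintype ι] [DecidableEq ι] {A : Matrix ι ι ℝ} {v : ι → ℝ} {θ l : ℝ}

theorem nonneg_of_smul_one_sub_mulVec_nonneg (hA : ∀ i j, 0 ≤ A i j) (hv : ∀ i, 0 < v i)
    (hAv : A *ᵥ v ≤ θ • v) (hl : θ < l) {y : ι → ℝ} (hy : 0 ≤ (l • 1 - A) *ᵥ y) : 0 ≤ y := by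
  by_contra hneg
  -- Minimum principle: at an index minimising `y / v` the row inequality forces `l y ≥ θ y`.
  obtain ⟨j, hj⟩ : ∃ j, y j < 0 := by simpa [Pi.le_def] using hneg
  obtain ⟨i, -, hi⟩ := exists_min_image univ (fun i => y i / v i) ⟨j, mem_univ j⟩
  set m := y i / v i
  have hm : m < 0 := (hi j (mem_univ j)).trans_lt (div_neg_of_neg_of_pos hj (hv j))
  have hyi : y i = m * v i := (div_mul_cancel₀ _ (hv i).ne').symm
  have hAy : m * (A *ᵥ v) i ≤ (A *ᵥ y) i := by
    simp only [mulVec, dotProduct, mul_sum]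
    refine sum_le_sum fun j _ => ?_
    have := (le_div_iff₀ (hv j)).1 (hi j (mem_univ j))
    nlinarith [hA i j]
  have hAv' : m * (θ * v i) ≤ m * (A *ᵥ v) i := mul_le_mul_of_nonpos_left (hAv i) hm.le
  have hrow := hy i
  rw [Pi.zero_apply, smul_one_sub_mulVec_apply, hyi] at hrow
  nlinarith [mul_neg_of_pos_of_neg (mul_pos (sub_pos.2 hl) (hv i)) hm]

theorem isUnit_det_smul_one_sub (hA : ∀ i j, 0 ≤ A i j) (hv : ∀ i, 0 < v i)
    (hAv : A *ᵥ v ≤ θ • v) (hl : θ < l) : IsUnit (l • 1 - A).det := by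
  rw [isUnit_iff_ne_zero, Ne, ← exists_mulVec_eq_zero_iff]
  rintro ⟨y, hy0, hy⟩
  have hpos := nonneg_of_smul_one_sub_mulVec_nonneg hA hv hAv hl hy.ge
  have hneg := nonneg_of_smul_one_sub_mulVec_nonneg hA hv hAv hl (y := -y)
    (by simp [mulVec_neg, hy])
  exact hy0 (le_antisymm (neg_nonneg.1 hneg) hpos)

end MMatrix

theorem eq_add_dotProduct_of_isRoot_charpoly {K : Type*} [Field K] {s : ℕ}
    (Q : Matrix (Fin (s + 1)) (Fin (s + 1)) K) {l : K}
    (hroot : Q.charpoly.IsRoot l) (hD : IsUnit (l • 1 - Q.submatrix Fin.succ Fin.succ).det) :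
    l = Q 0 0 + (fun j => Q 0 j.succ) ⬝ᵥ
      ((l • 1 - Q.submatrix Fin.succ Fin.succ)⁻¹ *ᵥ fun i => Q i.succ 0) := by
  set D := l • 1 - Q.submatrix Fin.succ Fin.succ
  obtain ⟨x, hx0, hx⟩ := exists_mulVec_eq_zero_iff.2 <| by
    rwa [IsRoot, eval_charpoly_eq_det_smul_one_sub] at hroot
  have hrow : ∀ i, l * x i = Q i 0 * x 0 + ∑ j : Fin s, Q i j.succ * x j.succ := fun i => by
    have := congrFun hx i
    rw [smul_one_sub_mulVec_apply, mulVec, dotProduct, Fin.sum_univ_succ, Pi.zero_apply] at this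
    linear_combination this
  have htail : Fin.tail x = x 0 • (D⁻¹ *ᵥ fun i => Q i.succ 0) := by
    have hD_tail : D *ᵥ Fin.tail x = x 0 • fun i => Q i.succ 0 := by
      ext i
      rw [smul_one_sub_mulVec_apply]
      simp only [Fin.tail, mulVec, dotProduct, submatrix_apply, Pi.smul_apply, smul_eq_mul]
      linear_combination hrow i.succ
    rw [← mulVec_smul, ← hD_tail, mulVec_mulVec, nonsing_inv_mul _ hD, one_mulVec]
  have hx00 : x 0 ≠ 0 := by
    intro h0
    refine hx0 (funext fun i => Fin.cases h0 (fun j => ?_) i)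
    simpa [h0, Fin.tail] using congrFun htail j
  have hsum : ∑ j : Fin s, Q 0 j.succ * x j.succ =
      x 0 * ((fun j => Q 0 j.succ) ⬝ᵥ (D⁻¹ *ᵥ fun i => Q i.succ 0)) := by
    rw [dotProduct, mul_sum]
    refine sum_congr rfl fun j _ => ?_
    rw [show x j.succ = _ from congrFun htail j, Pi.smul_apply, smul_eq_mul]
    ring
  apply mul_left_cancel₀ hx00
  linear_combination hrow 0 + hsum

theorem charpoly_roots_gt_subsingleton {s : ℕ} {θ : ℝ} {v : Fin s → ℝ}
    (Q : Matrix (Fin (s + 1)) (Fin (s + 1)) ℝ) (hQ : ∀ i j, 0 ≤ Q i j) (hv : ∀ i, 0 < v i)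
    (hQv : Q.submatrix Fin.succ Fin.succ *ᵥ v ≤ θ • v) :
    {l | θ < l ∧ Q.charpoly.IsRoot l}.Subsingleton := by
  rintro l₁ ⟨hθ₁, hroot₁⟩ l₂ ⟨hθ₂, hroot₂⟩
  have hQ' : ∀ i j, 0 ≤ Q.submatrix Fin.succ Fin.succ i j := fun i j => hQ _ _
  have hD₁ := isUnit_det_smul_one_sub hQ' hv hQv hθ₁
  have hD₂ := isUnit_det_smul_one_sub hQ' hv hQv hθ₂
  have e₁ := eq_add_dotProduct_of_isRoot_charpoly Q hroot₁ hD₁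
  have e₂ := eq_add_dotProduct_of_isRoot_charpoly Q hroot₂ hD₂
  set D₁ := l₁ • 1 - Q.submatrix Fin.succ Fin.succ
  set D₂ := l₂ • 1 - Q.submatrix Fin.succ Fin.succ
  set a : Fin s → ℝ := fun j => Q 0 j.succ
  set b : Fin s → ℝ := fun i => Q i.succ 0
  have hw : 0 ≤ D₂⁻¹ *ᵥ b := nonneg_of_smul_one_sub_mulVec_nonneg hQ' hv hQv hθ₂ <| by
    rw [mulVec_mulVec, mul_nonsing_inv _ hD₂, one_mulVec]
    exact fun i => hQ _ _
  have hu : 0 ≤ D₁⁻¹ *ᵥ (D₂⁻¹ *ᵥ b) := nonneg_of_smul_one_sub_mulVec_nonneg hQ' hv hQv hθ₁ <| by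
    rwa [mulVec_mulVec, mul_nonsing_inv _ hD₁, one_mulVec]
  have hT : 0 ≤ a ⬝ᵥ (D₁⁻¹ *ᵥ (D₂⁻¹ *ᵥ b)) := dotProduct_nonneg_of_nonneg (fun j => hQ _ _) hu
  have hresolvent : D₁⁻¹ - D₂⁻¹ = (l₂ - l₁) • (D₁⁻¹ * D₂⁻¹) := by
    rw [inv_sub_inv (by simp only [isUnit_iff_isUnit_det, hD₁, hD₂]),
      show D₂ - D₁ = (l₂ - l₁) • 1 by simp only [D₁, D₂, sub_smul]; abel,
      Matrix.mul_smul, mul_one, Matrix.smul_mul]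
  have hdiff : l₁ - l₂ = (l₂ - l₁) * (a ⬝ᵥ (D₁⁻¹ *ᵥ (D₂⁻¹ *ᵥ b))) := by
    calc l₁ - l₂ = a ⬝ᵥ ((D₁⁻¹ - D₂⁻¹) *ᵥ b) := by
          rw [sub_mulVec, dotProduct_sub]; linarith
      _ = _ := by rw [hresolvent, smul_mulVec, dotProduct_smul, smul_eq_mul, mulVec_mulVec]
  nlinarith

theorem det_ne_zero_of_sum_row_mul_lt_diag {ι : Type*} [Fintype ι] [DecidableEq ι]
    (A : Matrix ι ι ℝ) {v : ι → ℝ} (hv : ∀ i, 0 < v i)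
    (h : ∀ i, ∑ j ∈ univ.erase i, |A i j| * v j < |A i i| * v i) : A.det ≠ 0 := by
  have hAv := det_ne_zero_of_sum_row_lt_diag (A := A * diagonal v) fun i => by
    simpa [mul_diagonal, abs_mul, abs_of_pos (hv _)] using h i
  rw [det_mul] at hAv
  exact left_ne_zero_of_mul hAv

section WeightedRows

variable {m : ℕ} {Q : Matrix (Fin m) (Fin m) ℝ} {b R : ℝ}

theorem sum_erase_mul_pow_le (h1 : ∀ i j, Q i j ≤ 1) (hb : ∀ i j, i < j → Q i j ≤ b)
    (hb0 : 0 ≤ b) (hR : 1 ≤ R) (i : Fin m) :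
    ∑ j ∈ univ.erase i, Q i j * R ^ (j : ℕ) ≤ m * (R⁻¹ + b * R ^ (m - 1)) * R ^ (i : ℕ) := by
  have hR0 : 0 < R := one_pos.trans_le hR
  have hRi : 0 ≤ R⁻¹ * R ^ (i : ℕ) := by positivity
  have hRm : 0 ≤ b * R ^ (m - 1) * R ^ (i : ℕ) := by positivity
  have hterm : ∀ j ∈ univ.erase i,
      Q i j * R ^ (j : ℕ) ≤ (R⁻¹ + b * R ^ (m - 1)) * R ^ (i : ℕ) := by
    intro j hj
    rcases lt_or_gt_of_ne (ne_of_mem_erase hj) with hji | hij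
    · have : Q i j * R ^ (j : ℕ) ≤ R⁻¹ * R ^ (i : ℕ) :=
        calc Q i j * R ^ (j : ℕ) ≤ R ^ ((i : ℕ) - 1) :=
              (mul_le_of_le_one_left (by positivity) (h1 i j)).trans
                (pow_le_pow_right₀ hR (by omega))
          _ = R⁻¹ * R ^ (i : ℕ) := by
              rw [pow_sub₀ _ hR0.ne' (by omega), pow_one, mul_comm]
      linarith
    · have : Q i j * R ^ (j : ℕ) ≤ b * R ^ (m - 1) * R ^ (i : ℕ) :=
        calc Q i j * R ^ (j : ℕ) ≤ b * R ^ (m - 1) :=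
              mul_le_mul (hb i j hij) (pow_le_pow_right₀ hR (by omega)) (by positivity) hb0
          _ ≤ b * R ^ (m - 1) * R ^ (i : ℕ) := le_mul_of_one_le_right (by positivity)
              (one_le_pow₀ hR)
      linarith
  calc ∑ j ∈ univ.erase i, Q i j * R ^ (j : ℕ)
      ≤ ∑ _j ∈ univ.erase i, (R⁻¹ + b * R ^ (m - 1)) * R ^ (i : ℕ) := sum_le_sum hterm
    _ ≤ m * ((R⁻¹ + b * R ^ (m - 1)) * R ^ (i : ℕ)) := by
        rw [sum_const, nsmul_eq_mul]
        gcongr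
        exact_mod_cast (card_erase_le).trans (card_fin m).le
    _ = m * (R⁻¹ + b * R ^ (m - 1)) * R ^ (i : ℕ) := by ring

theorem mulVec_pow_le {d : ℝ} (h1 : ∀ i j, Q i j ≤ 1) (hb : ∀ i j, i < j → Q i j ≤ b)
    (hdiag : ∀ i, Q i i ≤ d) (hb0 : 0 ≤ b) (hR : 1 ≤ R) :
    Q *ᵥ (fun j : Fin m => R ^ (j : ℕ)) ≤
      (d + m * (R⁻¹ + b * R ^ (m - 1))) • fun j : Fin m => R ^ (j : ℕ) := by
  intro i
  rw [mulVec, dotProduct, ← add_sum_erase _ _ (mem_univ i), Pi.smul_apply, smul_eq_mul, add_mul]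
  exact add_le_add (mul_le_mul_of_nonneg_right (hdiag i) (by positivity))
    (sum_erase_mul_pow_le h1 hb hb0 hR i)

theorem eval_charpoly_ne_zero_of_le_neg_half (h0 : ∀ i j, 0 ≤ Q i j) (h1 : ∀ i j, Q i j ≤ 1)
    (hb : ∀ i j, i < j → Q i j ≤ b) (hb0 : 0 ≤ b) (hR : 1 ≤ R)
    (hsmall : m * (R⁻¹ + b * R ^ (m - 1)) < 1 / 2) {l : ℝ} (hl : l ≤ -(1 / 2)) :
    Q.charpoly.eval l ≠ 0 := by
  have hR0 : 0 < R := one_pos.trans_le hR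
  rw [eval_charpoly_eq_det_smul_one_sub]
  refine det_ne_zero_of_sum_row_mul_lt_diag _ (v := fun j => R ^ (j : ℕ))
    (fun j => pow_pos hR0 _) fun i => ?_
  have hoff : ∑ j ∈ univ.erase i, |(l • 1 - Q) i j| * R ^ (j : ℕ) =
      ∑ j ∈ univ.erase i, Q i j * R ^ (j : ℕ) := sum_congr rfl fun j hj => by
    simp [one_apply_ne (ne_of_mem_erase hj).symm, abs_of_nonneg (h0 i j)]
  have hdiag : |(l • 1 - Q) i i| = Q i i - l := by
    rw [Matrix.sub_apply, Matrix.smul_apply, one_apply_eq, smul_eq_mul, mul_one, abs_sub_comm,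
      abs_of_nonneg (by linarith [h0 i i])]
  rw [hoff, hdiag]
  calc ∑ j ∈ univ.erase i, Q i j * R ^ (j : ℕ)
      ≤ m * (R⁻¹ + b * R ^ (m - 1)) * R ^ (i : ℕ) := sum_erase_mul_pow_le h1 hb hb0 hR i
    _ < 1 / 2 * R ^ (i : ℕ) := mul_lt_mul_of_pos_right hsmall (pow_pos hR0 _)
    _ ≤ (Q i i - l) * R ^ (i : ℕ) := by gcongr; linarith [h0 i i]

end WeightedRows

theorem charpoly_roots_subsingleton_of_upper_le {s : ℕ} (hs : s ≠ 0) {c b C : ℝ}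
    (Q : Matrix (Fin (s + 1)) (Fin (s + 1)) ℝ) (h0 : ∀ i j, 0 ≤ Q i j) (h1 : ∀ i j, Q i j ≤ 1)
    (hdiag : ∀ i : Fin (s + 1), 1 ≤ (i : ℕ) → Q i i ≤ 1 - c) (hc : 0 < c)
    (hb : ∀ i j, i < j → Q i j ≤ b) (hb0 : 0 ≤ b) (hC : 0 ≤ C)
    (hbC : b ≤ C * ((2 * s * (1 + C))⁻¹ * c) ^ s) :
    {l | 1 - c ^ s / (s * 2 ^ (s + 1)) ≤ l ∧ Q.charpoly.IsRoot l}.Subsingleton := by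
  have hs1 : (1 : ℝ) ≤ s := by exact_mod_cast Nat.one_le_iff_ne_zero.2 hs
  have hc1 : c ≤ 1 := by linarith [hdiag ⟨1, by omega⟩ le_rfl, h0 ⟨1, by omega⟩ ⟨1, by omega⟩]
  have hD : 0 < 2 * s * (1 + C) := by positivity
  -- The weight `R = x⁻¹` is chosen so that the off-diagonal mass `s (x + C x)` equals `c / 2`.
  set x := (2 * s * (1 + C))⁻¹ * c
  have hx0 : 0 < x := by positivity
  have hx1 : 1 ≤ x⁻¹ := (one_le_inv₀ hx0).2 <|
    mul_le_one₀ (inv_le_one_of_one_le₀ (by nlinarith)) hc.le hc1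
  have hbx : b * x⁻¹ ^ (s - 1) ≤ C * x := by
    calc b * x⁻¹ ^ (s - 1) ≤ C * x ^ s * x⁻¹ ^ (s - 1) := by gcongr
      _ = C * x := by
        obtain ⟨t, rfl⟩ := Nat.exists_eq_add_one_of_ne_zero hs
        rw [Nat.add_sub_cancel, pow_succ, inv_pow]
        field_simp
  have hθ : 1 - c + s * (x⁻¹⁻¹ + b * x⁻¹ ^ (s - 1)) ≤ 1 - c / 2 := by
    have : 2 * s * (1 + C) * x = c := mul_inv_cancel_left₀ hD.ne' c
    rw [inv_inv]
    nlinarith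
  have hε : c ^ s / (s * 2 ^ (s + 1)) ≤ c / 4 := by
    have h4 : (4 : ℝ) ≤ s * 2 ^ (s + 1) := by
      calc (4 : ℝ) = 1 * 2 ^ 2 := by norm_num
        _ ≤ s * 2 ^ (s + 1) := by gcongr; norm_num; omega
    exact div_le_div₀ hc.le (pow_le_of_le_one hc.le hc1 hs) (by norm_num) h4
  refine (charpoly_roots_gt_subsingleton Q h0 (fun _ => pow_pos (by positivity) _)
    (mulVec_pow_le (fun _ _ => h1 _ _) (fun _ _ hij => hb _ _ (Fin.succ_lt_succ_iff.2 hij))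
      (fun i => hdiag i.succ (by simp)) hb0 hx1)).anti fun l hl => ⟨?_, hl.2⟩
  linarith [hl.1]

theorem exists_eventually_le_div_of_isBigO {ι : Type*} [Fintype ι] {f : ι → ℕ → ℝ}
    (hf : ∀ i, f i =O[atTop] fun n => 1 / (n : ℝ)) :
    ∃ C, 0 ≤ C ∧ ∀ᶠ n in atTop, ∀ i, f i n ≤ C / n := by
  choose C hC hfC using fun i => (hf i).exists_nonneg
  refine ⟨∑ i, C i, sum_nonneg fun i _ => hC i, ?_⟩
  filter_upwards [eventually_all.2 fun i => (hfC i).bound] with n hn i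
  calc f i n ≤ C i * ‖1 / (n : ℝ)‖ := (le_abs_self _).trans (hn i)
    _ = C i / n := by rw [Real.norm_of_nonneg (by positivity), mul_one_div]
    _ ≤ (∑ i, C i) / n :=
        div_le_div_of_nonneg_right (single_le_sum (fun i _ => hC i) (mem_univ i)) n.cast_nonneg

theorem eventually_inv_le_pow_of_isLittleO {s : ℕ} (hs : s ≠ 0) {c : ℕ → ℝ}
    (hc : ∀ n, 0 ≤ c n) (h : (fun n : ℕ => (n : ℝ) ^ (-(1 / (s : ℝ)))) =o[atTop] c)
    {δ : ℝ} (hδ : 0 < δ) : ∀ᶠ n : ℕ in atTop, (n : ℝ)⁻¹ ≤ (δ * c n) ^ s := by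
  filter_upwards [h.def hδ] with n hn
  rw [Real.norm_of_nonneg (by positivity), Real.norm_of_nonneg (hc n)] at hn
  calc (n : ℝ)⁻¹ = ((n : ℝ) ^ (-(1 / (s : ℝ)))) ^ s := by
        rw [← Real.rpow_mul_natCast n.cast_nonneg, neg_mul, one_div_mul_cancel (by simpa),
          Real.rpow_neg_one]
    _ ≤ (δ * c n) ^ s := pow_le_pow_left₀ (by positivity) hn s

theorem eventually_mul_inv_add_div_mul_pow_lt_half (m : ℕ) (C : ℝ) :
    ∀ᶠ n : ℕ in atTop, (m : ℝ) * ((4 * m : ℝ)⁻¹ + C / n * (4 * m) ^ (m - 1)) < 1 / 2 := by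
  have hlim : Tendsto (fun n : ℕ => (m : ℝ) * ((4 * m : ℝ)⁻¹ + C / n * (4 * m) ^ (m - 1))) atTop
      (nhds (m * ((4 * m : ℝ)⁻¹ + 0 * (4 * m) ^ (m - 1)))) :=
    (((tendsto_const_div_atTop_nhds_zero_nat C).mul_const _).const_add _).const_mul _
  refine hlim.eventually_lt_const ?_
  rcases eq_or_ne m 0 with rfl | hm
  · norm_num
  · rw [zero_mul, add_zero, mul_inv, mul_left_comm, mul_inv_cancel₀ (by exact_mod_cast hm)]
    norm_num

theorem char_poly_spectral_gap
    (k : ℕ) (hk : 2 ≤ k)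
    (P : ℕ → Matrix (Fin k) (Fin k) ℝ)
    (hentries : ∀ n (i j : Fin k), P n i j ∈ Set.Icc (0 : ℝ) 1)
    (hupper : ∀ i j : Fin k, i < j →
      (fun n : ℕ => P n i j) =O[atTop] fun n : ℕ => 1 / (n : ℝ))
    (c : ℕ → ℝ) (hcpos : ∀ n, 0 < c n)
    (hdiag : ∀ (i : Fin k), 1 ≤ (i : ℕ) → ∀ n, P n i i ≤ 1 - c n)
    (hcomega : (fun n : ℕ => ((n : ℝ)) ^ (-(1 / ((k : ℝ) - 1)))) =o[atTop] c) :
    ∀ᶠ n in atTop,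
      (∀ l₁ ∈ Set.Icc (1 - c n ^ (k - 1) / ((k - 1) * 2 ^ k)) (1 : ℝ),
        ∀ l₂ ∈ Set.Icc (1 - c n ^ (k - 1) / ((k - 1) * 2 ^ k)) (1 : ℝ),
          ((P n).charpoly).eval l₁ = 0 → ((P n).charpoly).eval l₂ = 0 → l₁ = l₂) ∧
      (∀ l : ℝ, l ≤ -(1 / 2) → ((P n).charpoly).eval l ≠ 0) := by
  obtain ⟨s, rfl⟩ : ∃ s, k = s + 1 := ⟨k - 1, by omega⟩
  have hs : s ≠ 0 := by omega
  simp only [Nat.cast_add, Nat.cast_one, add_sub_cancel_right, Nat.add_sub_cancel] at hcomega ⊢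
  obtain ⟨C, hC, hupperC⟩ := exists_eventually_le_div_of_isBigO
    (f := fun p : {p : Fin (s + 1) × Fin (s + 1) // p.1 < p.2} => fun n => P n p.1.1 p.1.2)
    fun p => hupper _ _ p.2
  have hδ : 0 < (2 * s * (1 + C))⁻¹ := by positivity
  filter_upwards [hupperC, eventually_mul_inv_add_div_mul_pow_lt_half (s + 1) C,
    eventually_inv_le_pow_of_isLittleO hs (fun n => (hcpos n).le) hcomega hδ]
    with n hb hsmall hn
  have hb' : ∀ i j, i < j → P n i j ≤ C / n := fun i j hij => hb ⟨(i, j), hij⟩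
  have hCn : 0 ≤ C / n := by positivity
  have h0 : ∀ i j, 0 ≤ P n i j := fun i j => (hentries n i j).1
  have h1 : ∀ i j, P n i j ≤ 1 := fun i j => (hentries n i j).2
  refine ⟨fun l₁ hl₁ l₂ hl₂ h₁ h₂ => ?_, fun l hl => eval_charpoly_ne_zero_of_le_neg_half
    h0 h1 hb' hCn (by push_cast; linarith) hsmall hl⟩
  refine charpoly_roots_subsingleton_of_upper_le hs (P n) h0 h1 (fun i hi => hdiag i hi n)
    (hcpos n) hb' hCn hC ?_ ⟨hl₁.1, h₁⟩ ⟨hl₂.1, h₂⟩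
  rw [div_eq_mul_inv]
  gcongr
end
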